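/- arXiv:2111.15527 — 3 statements merged into one kernel-verified Lean document; each statement's English description precedes it below -/
import Mathlib

section
/- Let θ be parameters of NN({m_l}_{l=0}^L), fix 1 ≤ l ≤ L-1 and α ∈ ℝ, and let θ' = T^α_{l,0}(θ) be the one-step null embedding of θ. Then for every input-output pair (x, y), the error vectors satisfy z^[l']_{θ'} = z^[l']_θ for every l' ∈ [L] with l' ≠ l, and z^[l]_{θ'} = [z^[l]_θ; 0] (the old error vector with a zero appended). -/
namespace EmbeddingPrinciple

/-- Parameters of a fully-connected NN: `(θ l).1 i j` is the weight `W^{[l+1]}_{ij}`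
and `(θ l).2 i` is the bias `b^{[l+1]}_i` (the paper's layer `l` corresponds to index `l-1`).
Only the coordinates below the widths are meaningful for a concrete architecture. -/
abbrev NNParams : Type := ℕ → (ℕ → ℕ → ℝ) × (ℕ → ℝ)

/-- Feature vectors `f^{[l]}` (entrywise activation `σ`); `m` is the width function. -/
noncomputable def feat (σ : ℝ → ℝ) (m : ℕ → ℕ) (θ : NNParams) (x : ℕ → ℝ) : ℕ → ℕ → ℝ
  | 0 => x
  | l + 1 => fun i =>
      σ ((∑ j ∈ Finset.range (m l), (θ l).1 i j * feat σ m θ x l j) + (θ l).2 i)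

/-- Pre-activation of layer `l+1`: `W^{[l+1]} f^{[l]} + b^{[l+1]}`. -/
noncomputable def preact (σ : ℝ → ℝ) (m : ℕ → ℕ) (θ : NNParams) (x : ℕ → ℝ) (l i : ℕ) : ℝ :=
  (∑ j ∈ Finset.range (m l), (θ l).1 i j * feat σ m θ x l j) + (θ l).2 i

/-- Output `f_θ` of the `(K+1)`-layer network (the paper's `L` is `K+1`). -/
noncomputable def nnOut (σ : ℝ → ℝ) (m : ℕ → ℕ) (K : ℕ) (θ : NNParams) (x : ℕ → ℝ) :
    ℕ → ℝ := fun i => preact σ m θ x K i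

/-- Feature gradient `g^{[l+1]} = σ'(W^{[l+1]} f^{[l]} + b^{[l+1]})`. -/
noncomputable def gFeat (σ : ℝ → ℝ) (m : ℕ → ℕ) (θ : NNParams) (x : ℕ → ℝ) (l i : ℕ) : ℝ :=
  deriv σ (preact σ m θ x l i)

/-- Output truncated to the valid output coordinates. -/
noncomputable def truncOut (σ : ℝ → ℝ) (m : ℕ → ℕ) (K : ℕ) (θ : NNParams) (x : ℕ → ℝ) :
    ℕ → ℝ := fun i => if i < m (K + 1) then nnOut σ m K θ x i else 0

/-- Empirical risk `R_S(θ) = (1/n) ∑ᵢ ℓ(f_θ(xᵢ), yᵢ)`. -/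
noncomputable def risk (σ : ℝ → ℝ) (m : ℕ → ℕ) (K : ℕ)
    (loss : (ℕ → ℝ) → (ℕ → ℝ) → ℝ) {n : ℕ} (X Y : Fin n → ℕ → ℝ) (θ : NNParams) : ℝ :=
  (n : ℝ)⁻¹ * ∑ a : Fin n, loss (truncOut σ m K θ (X a)) (Y a)

/-- Update a single weight coordinate. -/
def updW (θ : NNParams) (l i j : ℕ) (t : ℝ) : NNParams := fun l' =>
  if l' = l then ((fun i' j' => if i' = i ∧ j' = j then t else (θ l).1 i' j'), (θ l).2)
  else θ l'

/-- Update a single bias coordinate. -/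
def updB (θ : NNParams) (l i : ℕ) (t : ℝ) : NNParams := fun l' =>
  if l' = l then ((θ l).1, fun i' => if i' = i then t else (θ l).2 i') else θ l'

/-- `θ` is a critical point of `R` : all partial derivatives with respect to the valid
coordinates of the `(K+1)`-layer architecture with width function `m` vanish. -/
def IsCritical (R : NNParams → ℝ) (m : ℕ → ℕ) (K : ℕ) (θ : NNParams) : Prop :=
  (∀ l, l ≤ K → ∀ i, i < m (l + 1) → ∀ j, j < m l →
      deriv (fun t => R (updW θ l i j t)) ((θ l).1 i j) = 0) ∧
  (∀ l, l ≤ K → ∀ i, i < m (l + 1) →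
      deriv (fun t => R (updB θ l i t)) ((θ l).2 i) = 0)

/-- Equality of two parameter tuples on all valid coordinates of the architecture. -/
def ParamEqOn (m : ℕ → ℕ) (K : ℕ) (θ₁ θ₂ : NNParams) : Prop :=
  ∀ l, l ≤ K → ∀ i, i < m (l + 1) →
    (∀ j, j < m l → (θ₁ l).1 i j = (θ₂ l).1 i j) ∧ (θ₁ l).2 i = (θ₂ l).2 i

/-- Error vectors by reversed index: `errRev … t = z^{[K+1-t]}`, where `z^{[K+1]} = ∇ℓ`
(represented by the function `dloss`) and `z^{[l]} = (W^{[l+1]})ᵀ (z^{[l+1]} ∘ g^{[l+1]})`. -/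
noncomputable def errRev (σ : ℝ → ℝ) (m : ℕ → ℕ) (K : ℕ) (θ : NNParams)
    (dloss : (ℕ → ℝ) → (ℕ → ℝ) → ℕ → ℝ) (x y : ℕ → ℝ) : ℕ → ℕ → ℝ
  | 0 => dloss (truncOut σ m K θ x) y
  | t + 1 => fun j =>
      ∑ i ∈ Finset.range (m (K + 1 - t)),
        (θ (K - t)).1 i j *
          (errRev σ m K θ dloss x y t i * (if t = 0 then 1 else gFeat σ m θ x (K - t) i))

/-- `e^{[l]} = z^{[l]} ∘ g^{[l]}` (with `g^{[K+1]} = 1`). -/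
noncomputable def errE (σ : ℝ → ℝ) (m : ℕ → ℕ) (K : ℕ) (θ : NNParams)
    (dloss : (ℕ → ℝ) → (ℕ → ℝ) → ℕ → ℝ) (x y : ℕ → ℝ) (l i : ℕ) : ℝ :=
  errRev σ m K θ dloss x y (K + 1 - l) i *
    (if l = K + 1 then 1 else gFeat σ m θ x (l - 1) i)

/-- Differentiability of the loss in its first argument (on each finite-dimensional
coordinate block). -/
def LossDiff (loss : (ℕ → ℝ) → (ℕ → ℝ) → ℝ) : Prop :=
  ∀ (y : ℕ → ℝ) (d : ℕ),
    Differentiable ℝ (fun u : Fin d → ℝ => loss (fun i => if h : i < d then u ⟨i, h⟩ else 0) y)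

/-- Widths after adding one neuron in the paper's layer `p+1`. -/
def widen (m : ℕ → ℕ) (p : ℕ) : ℕ → ℕ := fun l => if l = p + 1 then m (p + 1) + 1 else m l

/-- One-step null embedding `T^α_{l,0}` at the paper's layer `l = p+1`. -/
def nullEmb (m : ℕ → ℕ) (p : ℕ) (α : ℝ) (θ : NNParams) : NNParams := fun l =>
  if l = p then
    ((fun i j => if i = m (p + 1) then 0 else (θ p).1 i j),
     (fun i => if i = m (p + 1) then α else (θ p).2 i))
  else if l = p + 1 then
    ((fun i j => if j = m (p + 1) then 0 else (θ (p + 1)).1 i j), (θ (p + 1)).2)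
  else θ l

/-- One-step splitting embedding `T^α_{l,s}` at the paper's layer `l = p+1`,
splitting neuron `s`. -/
def splitEmb (m : ℕ → ℕ) (p s : ℕ) (α : ℝ) (θ : NNParams) : NNParams := fun l =>
  if l = p then
    ((fun i j => if i = m (p + 1) then (θ p).1 s j else (θ p).1 i j),
     (fun i => if i = m (p + 1) then (θ p).2 s else (θ p).2 i))
  else if l = p + 1 then
    ((fun i j =>
        if j = s then (1 - α) * (θ (p + 1)).1 i s
        else if j = m (p + 1) then α * (θ (p + 1)).1 i s
        else (θ (p + 1)).1 i j),
     (θ (p + 1)).2)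
  else θ l

/-!
The appended neuron has zero incoming weights and its outgoing column is zero. Hence every
pre-activation of an original neuron is unchanged (the new neuron's summand in the next layer
vanishes), and so are all features, feature gradients and the network output. Running
backpropagation, the extra summand contributed by the new neuron again vanishes, and the new
entry of `z^{[l]}` is the zero column of `W^{[l+1]}` paired with `z^{[l+1]} ∘ g^{[l+1]}`.
-/

open Finset

section NullEmbedding

variable {σ : ℝ → ℝ} {m : ℕ → ℕ} {p : ℕ} {α : ℝ} {θ : NNParams} {x : ℕ → ℝ}

lemma widen_self : widen m p (p + 1) = m (p + 1) + 1 := if_pos rfl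

lemma widen_of_ne {l : ℕ} (h : l ≠ p + 1) : widen m p l = m l := if_neg h

lemma nullEmb_fst_of_ne {l i j : ℕ} (hi : l = p → i ≠ m (p + 1))
    (hj : l = p + 1 → j ≠ m (p + 1)) : (nullEmb m p α θ l).1 i j = (θ l).1 i j := by
  unfold nullEmb
  split_ifs <;> simp_all

lemma nullEmb_snd_of_ne {l i : ℕ} (hi : l = p → i ≠ m (p + 1)) :
    (nullEmb m p α θ l).2 i = (θ l).2 i := by
  unfold nullEmb
  split_ifs <;> simp_all

lemma nullEmb_fst_last_row (j : ℕ) : (nullEmb m p α θ p).1 (m (p + 1)) j = 0 := by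
  simp [nullEmb]

lemma nullEmb_fst_last_col (i : ℕ) : (nullEmb m p α θ (p + 1)).1 i (m (p + 1)) = 0 := by
  simp [nullEmb]

lemma sum_nullEmb_row_mul {l i : ℕ} (hi : l = p → i ≠ m (p + 1)) {u' u : ℕ → ℝ}
    (hu : ∀ j < m l, u' j = u j) :
    ∑ j ∈ range (widen m p l), (nullEmb m p α θ l).1 i j * u' j =
      ∑ j ∈ range (m l), (θ l).1 i j * u j := by
  by_cases hl : l = p + 1
  · subst hl
    rw [widen_self, sum_range_succ, nullEmb_fst_last_col, zero_mul, add_zero]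
    refine sum_congr rfl fun j hj => ?_
    have hj := mem_range.mp hj
    rw [nullEmb_fst_of_ne hi (by omega), hu j hj]
  · rw [widen_of_ne hl]
    refine sum_congr rfl fun j hj => ?_
    rw [nullEmb_fst_of_ne hi (absurd · hl), hu j (mem_range.mp hj)]

lemma sum_nullEmb_col_mul {l j : ℕ} (hj : l = p + 1 → j ≠ m (p + 1)) {v' v : ℕ → ℝ}
    (hv : ∀ i < m (l + 1), v' i = v i) :
    ∑ i ∈ range (widen m p (l + 1)), (nullEmb m p α θ l).1 i j * v' i =
      ∑ i ∈ range (m (l + 1)), (θ l).1 i j * v i := by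
  by_cases hl : l = p
  · subst hl
    rw [widen_self, sum_range_succ, nullEmb_fst_last_row, zero_mul, add_zero]
    refine sum_congr rfl fun i hi => ?_
    have hi := mem_range.mp hi
    rw [nullEmb_fst_of_ne (by omega) hj, hv i hi]
  · rw [widen_of_ne (by omega)]
    refine sum_congr rfl fun i hi => ?_
    rw [nullEmb_fst_of_ne (absurd · hl) hj, hv i (mem_range.mp hi)]

lemma preact_nullEmb_of_feat {l i : ℕ} (hi : l = p → i ≠ m (p + 1))
    (hfeat : ∀ j < m l, feat σ (widen m p) (nullEmb m p α θ) x l j = feat σ m θ x l j) :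
    preact σ (widen m p) (nullEmb m p α θ) x l i = preact σ m θ x l i := by
  unfold preact
  rw [sum_nullEmb_row_mul hi hfeat, nullEmb_snd_of_ne hi]

lemma feat_nullEmb : ∀ l, ∀ j < m l,
    feat σ (widen m p) (nullEmb m p α θ) x l j = feat σ m θ x l j
  | 0, _, _ => rfl
  | l + 1, j, hj =>
    congrArg σ (preact_nullEmb_of_feat (by rintro rfl; omega) (feat_nullEmb l))

lemma preact_nullEmb {l i : ℕ} (hi : l = p → i ≠ m (p + 1)) :
    preact σ (widen m p) (nullEmb m p α θ) x l i = preact σ m θ x l i :=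
  preact_nullEmb_of_feat hi (feat_nullEmb l)

lemma gFeat_nullEmb {l i : ℕ} (hi : l = p → i ≠ m (p + 1)) :
    gFeat σ (widen m p) (nullEmb m p α θ) x l i = gFeat σ m θ x l i :=
  congrArg (deriv σ) (preact_nullEmb hi)

lemma truncOut_nullEmb {K : ℕ} (hp : p < K) :
    truncOut σ (widen m p) K (nullEmb m p α θ) x = truncOut σ m K θ x := by
  funext i
  unfold truncOut nnOut
  rw [widen_of_ne (by omega), preact_nullEmb (by omega)]

lemma errRev_nullEmb {K : ℕ} (hp : p < K) (dloss : (ℕ → ℝ) → (ℕ → ℝ) → ℕ → ℝ) (y : ℕ → ℝ) :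
    ∀ t ≤ K, ∀ j, (t = K - p → j ≠ m (p + 1)) →
      errRev σ (widen m p) K (nullEmb m p α θ) dloss x y t j = errRev σ m K θ dloss x y t j := by
  intro t
  induction t with
  | zero =>
    intro _ j _
    simp only [errRev]
    rw [truncOut_nullEmb hp]
  | succ t ih =>
    intro ht j hj
    simp only [errRev]
    rw [show K + 1 - t = K - t + 1 by omega]
    refine sum_nullEmb_col_mul (fun _ => hj (by omega)) fun i hi => ?_
    have hi' : K - t = p → i ≠ m (p + 1) := by
      intro h
      rw [h] at hi
      omega
    rw [ih (by omega) i (fun _ => hi' (by omega)), gFeat_nullEmb hi']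

end NullEmbedding

theorem one_step_null_embedding_error_vectors_general
    (K : ℕ) (m : ℕ → ℕ) (σ : ℝ → ℝ)
    (dloss : (ℕ → ℝ) → (ℕ → ℝ) → ℕ → ℝ)
    (p : ℕ) (hp : p < K) (α : ℝ) (θ : NNParams) (x y : ℕ → ℝ) :
    -- for every layer `l' ∈ [L]`, `l' ≠ p+1`, the error vectors agree
    (∀ l', 1 ≤ l' → l' ≤ K + 1 → l' ≠ p + 1 → ∀ j,
        errRev σ (widen m p) K (nullEmb m p α θ) dloss x y (K + 1 - l') j =
          errRev σ m K θ dloss x y (K + 1 - l') j) ∧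
    -- at layer `p+1` the old error vector is kept and a zero entry is appended
    (∀ j, j < m (p + 1) →
        errRev σ (widen m p) K (nullEmb m p α θ) dloss x y (K - p) j =
          errRev σ m K θ dloss x y (K - p) j) ∧
    errRev σ (widen m p) K (nullEmb m p α θ) dloss x y (K - p) (m (p + 1)) = 0 := by
  refine ⟨fun l' h1 h2 hl' j => errRev_nullEmb hp dloss y _ (by omega) j (by omega),
    fun j hj => errRev_nullEmb hp dloss y _ (by omega) j (by omega), ?_⟩
  obtain ⟨t, ht⟩ : ∃ t, K - p = t + 1 := ⟨K - p - 1, by omega⟩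
  rw [ht]
  simp only [errRev]
  refine sum_eq_zero fun i _ => ?_
  rw [show K - t = p + 1 by omega, nullEmb_fst_last_col, zero_mul]

/-- error vectors under the one-step null embedding.
`errRev … (K+1-l')` is the paper's `z^{[l']}`; `dloss` represents `∇ℓ`. -/
theorem one_step_null_embedding_error_vectors
    (K : ℕ) (hK : 1 ≤ K) (m : ℕ → ℕ) (σ : ℝ → ℝ) (hσ : Differentiable ℝ σ)
    (loss : (ℕ → ℝ) → (ℕ → ℝ) → ℝ) (hloss : LossDiff loss)
    (dloss : (ℕ → ℝ) → (ℕ → ℝ) → ℕ → ℝ)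
    (hdl : ∀ (u y : ℕ → ℝ) (i : ℕ),
        HasDerivAt (fun t => loss (Function.update u i t) y) (dloss u y i) (u i))
    (p : ℕ) (hp : p < K) (α : ℝ) (θ : NNParams) (x y : ℕ → ℝ) :
    -- for every layer `l' ∈ [L]`, `l' ≠ p+1`, the error vectors agree
    (∀ l', 1 ≤ l' → l' ≤ K + 1 → l' ≠ p + 1 → ∀ j,
        errRev σ (widen m p) K (nullEmb m p α θ) dloss x y (K + 1 - l') j =
          errRev σ m K θ dloss x y (K + 1 - l') j) ∧
    -- at layer `p+1` the old error vector is kept and a zero entry is appended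
    (∀ j, j < m (p + 1) →
        errRev σ (widen m p) K (nullEmb m p α θ) dloss x y (K - p) j =
          errRev σ m K θ dloss x y (K - p) j) ∧
    errRev σ (widen m p) K (nullEmb m p α θ) dloss x y (K - p) (m (p + 1)) = 0 :=
  one_step_null_embedding_error_vectors_general K m σ dloss p hp α θ x y

end EmbeddingPrinciple
end

section
/- (Embedding Principle of critical functions.) Given NN({m_l}_{l=0}^L) and any wider NN({m'_l}_{l=0}^L) (m'_0 = m_0, m'_L = m_L, m'_l ≥ m_l for all l ∈ [L-1]), for any data S, loss ℓ and activation σ (each differentiable), the set of critical functions of the narrow network is contained in that of the wide network: every function f : ℝ^d → ℝ^{d'} of the form f = f_{θ} for some critical point θ of the narrow network's empirical risk also satisfies f = f_{θ'} for some critical point θ' of the wider network's empirical risk. -/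
namespace EmbeddingPrinciple

/-- A one-step embedding step: layer index `p` (the paper's layer `p+1`),
`none` for a null embedding / `some s` for splitting neuron `s`, and the
free parameter `α`. -/
abbrev EmbStep : Type := ℕ × Option ℕ × ℝ

/-- The one-step embedding determined by a step. -/
def stepEmb (m : ℕ → ℕ) (st : EmbStep) (θ : NNParams) : NNParams :=
  match st.2.1 with
  | none => nullEmb m st.1 st.2.2 θ
  | some s => splitEmb m st.1 s st.2.2 θ

/-- Width function after performing a sequence of one-step embeddings. -/
def multiWidth (m : ℕ → ℕ) : List EmbStep → (ℕ → ℕ)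
  | [] => m
  | st :: rest => multiWidth (widen m st.1) rest

/-- The multi-step composition embedding of a sequence of one-step embeddings. -/
def multiEmb (m : ℕ → ℕ) : List EmbStep → NNParams → NNParams
  | [], θ => θ
  | st :: rest, θ => multiEmb (widen m st.1) rest (stepEmb m st θ)

/-- Validity of a sequence of steps: each step acts on a layer `p+1 ∈ [L-1]` and,
for a splitting step, splits an existing neuron of the current width. -/
def ValidSteps (K : ℕ) (m : ℕ → ℕ) : List EmbStep → Prop
  | [] => True
  | st :: rest => st.1 < K ∧ (∀ s, st.2.1 = some s → s < m (st.1 + 1)) ∧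
      ValidSteps K (widen m st.1) rest

/-!
Pad the narrow parameters with zeros, so that every extra neuron has zero incoming weights,
zero bias and zero outgoing weights. Whenever the contributions of the extra neurons to an old
neuron are absorbed into the old neuron's bias, the wide network has the same pre-activations
at the old neurons, hence the same risk. Moving one coordinate of the padded parameters therefore
either moves the same coordinate of the narrow parameters (old coordinates), changes nothing (the
incoming weights and bias of an extra neuron, whose outgoing weights are zero), or, for the weight
from an extra neuron, whose feature is the constant `σ 0`, into an old neuron `i`, acts as the
affine reparametrisation `t ↦ bᵢ + σ 0 * t` of the bias of `i`. In every case the partial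
derivative of the wide risk is zero or a multiple of a partial derivative of the narrow risk.
-/

def pad (m : ℕ → ℕ) (θ : NNParams) : NNParams := fun l =>
  (fun i j => if i < m (l + 1) ∧ j < m l then (θ l).1 i j else 0,
   fun i => if i < m (l + 1) then (θ l).2 i else 0)

lemma deriv_comp_const_add_mul_zero (F : ℝ → ℝ) (c a : ℝ) :
    deriv (fun t => F (c + a * t)) 0 = a * deriv F c := by
  have h := deriv_comp_mul_left a (fun u => F (c + u)) 0
  simp only [smul_eq_mul, mul_zero, deriv_comp_const_add, add_zero] at h
  exact h

lemma feat_succ_eq_of_row_eq_zero (σ : ℝ → ℝ) (m : ℕ → ℕ) (Θ : NNParams) (x : ℕ → ℝ)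
    {l j : ℕ} (hW : ∀ k, (Θ l).1 j k = 0) (hb : (Θ l).2 j = 0) :
    feat σ m Θ x (l + 1) j = σ 0 := by
  simp [feat, hW, hb]

section Absorb

variable (σ : ℝ → ℝ) {m m' : ℕ → ℕ} {K : ℕ} {Θ Θ' : NNParams}

def Absorbs (σ : ℝ → ℝ) (m m' : ℕ → ℕ) (K : ℕ) (Θ' Θ : NNParams) : Prop :=
  (∀ l ≤ K, ∀ i < m (l + 1), ∀ j < m l, (Θ' l).1 i j = (Θ l).1 i j) ∧
  ∀ x, ∀ l ≤ K, ∀ i < m (l + 1),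
    (Θ' l).2 i + ∑ j ∈ Finset.Ico (m l) (m' l), (Θ' l).1 i j * feat σ m' Θ' x l j = (Θ l).2 i

lemma preact_eq_of_absorb (x : ℕ → ℝ) {l i : ℕ} (hw : m l ≤ m' l)
    (hW : ∀ j < m l, (Θ' l).1 i j = (Θ l).1 i j)
    (hb : (Θ' l).2 i + ∑ j ∈ Finset.Ico (m l) (m' l), (Θ' l).1 i j * feat σ m' Θ' x l j
      = (Θ l).2 i)
    (hfeat : ∀ j < m l, feat σ m' Θ' x l j = feat σ m Θ x l j) :
    preact σ m' Θ' x l i = preact σ m Θ x l i := by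
  have hold : ∑ j ∈ Finset.range (m l), (Θ' l).1 i j * feat σ m' Θ' x l j
      = ∑ j ∈ Finset.range (m l), (Θ l).1 i j * feat σ m Θ x l j :=
    Finset.sum_congr rfl fun j hj => by
      rw [hW j (Finset.mem_range.mp hj), hfeat j (Finset.mem_range.mp hj)]
  rw [preact, preact, Finset.range_eq_Ico, ← Finset.sum_Ico_consecutive _ (Nat.zero_le _) hw,
    ← Finset.range_eq_Ico, hold, ← hb]
  ring

lemma Absorbs.feat_eq (h : Absorbs σ m m' K Θ' Θ) (hw : ∀ l ≤ K, m l ≤ m' l) (x : ℕ → ℝ) :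
    ∀ l ≤ K, ∀ j < m l, feat σ m' Θ' x l j = feat σ m Θ x l j := by
  intro l
  induction l with
  | zero => exact fun _ _ _ => rfl
  | succ l ih =>
    intro hl j hj
    have hl' : l ≤ K := by omega
    exact congrArg σ (preact_eq_of_absorb σ x (hw l hl') (h.1 l hl' j hj) (h.2 x l hl' j hj)
      (ih hl'))

lemma Absorbs.preact_eq (h : Absorbs σ m m' K Θ' Θ) (hw : ∀ l ≤ K, m l ≤ m' l) (x : ℕ → ℝ)
    {l i : ℕ} (hl : l ≤ K) (hi : i < m (l + 1)) :
    preact σ m' Θ' x l i = preact σ m Θ x l i :=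
  preact_eq_of_absorb σ x (hw l hl) (h.1 l hl i hi) (h.2 x l hl i hi) (h.feat_eq σ hw x l hl)

lemma Absorbs.risk_eq (h : Absorbs σ m m' K Θ' Θ) (hw : ∀ l ≤ K, m l ≤ m' l)
    (hLtop : m' (K + 1) = m (K + 1)) (loss : (ℕ → ℝ) → (ℕ → ℝ) → ℝ) {n : ℕ}
    (X Y : Fin n → ℕ → ℝ) :
    risk σ m' K loss X Y Θ' = risk σ m K loss X Y Θ := by
  have hout : ∀ x, truncOut σ m' K Θ' x = truncOut σ m K Θ x := fun x => by
    funext i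
    simp only [truncOut, nnOut, hLtop]
    split_ifs with hi
    · exact h.preact_eq σ hw x le_rfl hi
    · rfl
  simp only [risk, hout]

end Absorb

section Pad

variable (σ : ℝ → ℝ) {m m' : ℕ → ℕ} {K : ℕ} (loss : (ℕ → ℝ) → (ℕ → ℝ) → ℝ) {n : ℕ}
  (X Y : Fin n → ℕ → ℝ) (θ : NNParams)

lemma absorbs_of_rows_eq_pad {Θ' : NNParams} (hrow : ∀ l ≤ K, ∀ i < m (l + 1),
      (Θ' l).1 i = (pad m θ l).1 i ∧ (Θ' l).2 i = (pad m θ l).2 i) :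
    Absorbs σ m m' K Θ' θ := by
  refine ⟨fun l hl i hi j hj => ?_, fun x l hl i hi => ?_⟩
  · simp [(hrow l hl i hi).1, pad, hi, hj]
  · have hextra : ∀ j ∈ Finset.Ico (m l) (m' l), (Θ' l).1 i j * feat σ m' Θ' x l j = 0 :=
      fun j hj => by simp [(hrow l hl i hi).1, pad, (Finset.mem_Ico.mp hj).1]
    simp [Finset.sum_eq_zero hextra, (hrow l hl i hi).2, pad, hi]

lemma absorbs_pad : Absorbs σ m m' K (pad m θ) θ :=
  absorbs_of_rows_eq_pad σ θ fun _ _ _ _ => ⟨rfl, rfl⟩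

lemma risk_pad (hw : ∀ l ≤ K, m l ≤ m' l) (hLtop : m' (K + 1) = m (K + 1)) :
    risk σ m' K loss X Y (pad m θ) = risk σ m K loss X Y θ :=
  (absorbs_pad σ θ).risk_eq σ hw hLtop loss X Y

lemma updW_pad_apply_of_le {l p i j i' k : ℕ} (t : ℝ) (hk : m l ≤ k) :
    (updW (pad m θ) p i j t l).1 i' k = if l = p ∧ i' = i ∧ k = j then t else 0 := by
  have hk' : ¬ k < m l := by omega
  by_cases hl : l = p
  · subst hl
    simp [updW, pad, hk']
  · simp [updW, pad, hk', hl]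

lemma updW_pad {l i j : ℕ} (hi : i < m (l + 1)) (hj : j < m l) (t : ℝ) :
    updW (pad m θ) l i j t = pad m (updW θ l i j t) := by
  funext l'
  by_cases hl : l' = l
  · subst hl
    ext i' j' <;> simp only [updW, pad, if_true]
    split_ifs <;> grind
  · simp [updW, pad, hl]

lemma updB_pad {l i : ℕ} (hi : i < m (l + 1)) (t : ℝ) :
    updB (pad m θ) l i t = pad m (updB θ l i t) := by
  funext l'
  by_cases hl : l' = l
  · subst hl
    ext i' j' <;> simp only [updB, pad, if_true]
    split_ifs <;> grind
  · simp [updB, pad, hl]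

lemma risk_updW_pad_of_extra_target {l i j : ℕ} (hw : ∀ l ≤ K, m l ≤ m' l)
    (hLtop : m' (K + 1) = m (K + 1)) (hi : m (l + 1) ≤ i) (t : ℝ) :
    risk σ m' K loss X Y (updW (pad m θ) l i j t) = risk σ m K loss X Y θ := by
  refine (absorbs_of_rows_eq_pad σ θ fun l' _ i' hi' => ?_).risk_eq σ hw hLtop loss X Y
  by_cases hl : l' = l
  · subst hl
    have hne : i' ≠ i := by omega
    simp [updW, hne]
  · simp [updW, hl]

lemma risk_updB_pad_of_extra_target {l i : ℕ} (hw : ∀ l ≤ K, m l ≤ m' l)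
    (hLtop : m' (K + 1) = m (K + 1)) (hi : m (l + 1) ≤ i) (t : ℝ) :
    risk σ m' K loss X Y (updB (pad m θ) l i t) = risk σ m K loss X Y θ := by
  refine (absorbs_of_rows_eq_pad σ θ fun l' _ i' hi' => ?_).risk_eq σ hw hLtop loss X Y
  by_cases hl : l' = l
  · subst hl
    have hne : i' ≠ i := by omega
    simp [updB, hne]
  · simp [updB, hl]

lemma risk_updW_pad_of_extra_source {p i j : ℕ} (hw : ∀ l ≤ K, m l ≤ m' l)
    (hLtop : m' (K + 1) = m (K + 1)) (hj : m (p + 1) ≤ j) (hj' : j < m' (p + 1)) (t : ℝ) :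
    risk σ m' K loss X Y (updW (pad m θ) (p + 1) i j t)
      = risk σ m K loss X Y (updB θ (p + 1) i ((θ (p + 1)).2 i + σ 0 * t)) := by
  set Θ' := updW (pad m θ) (p + 1) i j t
  have hfeat : ∀ x, feat σ m' Θ' x (p + 1) j = σ 0 := fun x =>
    feat_succ_eq_of_row_eq_zero σ m' Θ' x (by simp [Θ', updW, pad]; omega)
      (by simp [Θ', updW, pad]; omega)
  refine Absorbs.risk_eq σ ⟨fun l _ i' hi' k hk => ?_, fun x l _ i' hi' => ?_⟩ hw hLtop
    loss X Y
  · by_cases hl : l = p + 1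
    · subst hl
      have hne : ¬ (i' = i ∧ k = j) := by omega
      simp [Θ', updW, updB, pad, hne, hk, hi']
    · simp [Θ', updW, updB, pad, hl, hk, hi']
  · have hterm : ∀ k ∈ Finset.Ico (m l) (m' l), (Θ' l).1 i' k * feat σ m' Θ' x l k
        = if l = p + 1 ∧ i' = i ∧ k = j then t * σ 0 else 0 := by
      intro k hk
      rw [updW_pad_apply_of_le θ t (Finset.mem_Ico.mp hk).1]
      split_ifs with h
      · obtain ⟨rfl, -, rfl⟩ := h
        rw [hfeat]
      · rw [zero_mul]
    rw [Finset.sum_congr rfl hterm]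
    by_cases h : l = p + 1 ∧ i' = i
    · obtain ⟨rfl, rfl⟩ := h
      simp [Θ', updW, updB, pad, hi', Finset.sum_ite_eq', hj, hj']
      ring
    · rw [Finset.sum_eq_zero fun k _ => if_neg fun h' => h ⟨h'.1, h'.2.1⟩, add_zero]
      by_cases hl : l = p + 1
      · subst hl
        have hne : i' ≠ i := fun e => h ⟨rfl, e⟩
        simp [Θ', updW, updB, pad, hi', hne]
      · simp [Θ', updW, updB, pad, hi', hl]

variable {θ}

lemma deriv_risk_updW_pad_eq_zero (h0 : m' 0 = m 0) (hw : ∀ l ≤ K, m l ≤ m' l)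
    (hLtop : m' (K + 1) = m (K + 1)) (hcrit : IsCritical (risk σ m K loss X Y) m K θ)
    {l i j : ℕ} (hl : l ≤ K) (hj : j < m' l) :
    deriv (fun t => risk σ m' K loss X Y (updW (pad m θ) l i j t)) ((pad m θ l).1 i j) = 0 := by
  by_cases hi : i < m (l + 1)
  · by_cases hjl : j < m l
    · simp only [updW_pad θ hi hjl, risk_pad σ loss X Y _ hw hLtop]
      simpa [pad, hi, hjl] using hcrit.1 l hl i hi j hjl
    · rcases l with _ | p
      · exact absurd (h0 ▸ hj) hjl
      simp only [risk_updW_pad_of_extra_source σ loss X Y θ hw hLtop (not_lt.mp hjl) hj, pad,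
        hjl, and_false, if_false]
      rw [deriv_comp_const_add_mul_zero (fun b => risk σ m K loss X Y (updB θ (p + 1) i b)),
        hcrit.2 _ hl i hi, mul_zero]
  · simp only [risk_updW_pad_of_extra_target σ loss X Y θ hw hLtop (not_lt.mp hi), deriv_const]

lemma deriv_risk_updB_pad_eq_zero (hw : ∀ l ≤ K, m l ≤ m' l)
    (hLtop : m' (K + 1) = m (K + 1)) (hcrit : IsCritical (risk σ m K loss X Y) m K θ)
    {l i : ℕ} (hl : l ≤ K) :
    deriv (fun t => risk σ m' K loss X Y (updB (pad m θ) l i t)) ((pad m θ l).2 i) = 0 := by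
  by_cases hi : i < m (l + 1)
  · simp only [updB_pad θ hi, risk_pad σ loss X Y _ hw hLtop]
    simpa [pad, hi] using hcrit.2 l hl i hi
  · simp only [risk_updB_pad_of_extra_target σ loss X Y θ hw hLtop (not_lt.mp hi), deriv_const]

lemma IsCritical.pad (h0 : m' 0 = m 0) (hw : ∀ l ≤ K, m l ≤ m' l)
    (hLtop : m' (K + 1) = m (K + 1)) (hcrit : IsCritical (risk σ m K loss X Y) m K θ) :
    IsCritical (risk σ m' K loss X Y) m' K (pad m θ) :=
  ⟨fun _ hl _ _ _ hj => deriv_risk_updW_pad_eq_zero σ loss X Y h0 hw hLtop hcrit hl hj,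
    fun _ hl _ _ => deriv_risk_updB_pad_eq_zero σ loss X Y hw hLtop hcrit hl⟩

end Pad

theorem embedding_principle_critical_functions_general
    (K : ℕ) (m m' : ℕ → ℕ)
    (h0 : m' 0 = m 0) (hLtop : m' (K + 1) = m (K + 1))
    (hle : ∀ l, 1 ≤ l → l ≤ K → m l ≤ m' l)
    (σ : ℝ → ℝ)
    (loss : (ℕ → ℝ) → (ℕ → ℝ) → ℝ)
    (n : ℕ) (X Y : Fin n → ℕ → ℝ)
    (θ : NNParams) (hcrit : IsCritical (risk σ m K loss X Y) m K θ) :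
    ∃ θ' : NNParams,
      IsCritical (risk σ m' K loss X Y) m' K θ' ∧
      ∀ (x : ℕ → ℝ) (i : ℕ), i < m (K + 1) →
        nnOut σ m' K θ' x i = nnOut σ m K θ x i := by
  have hw : ∀ l ≤ K, m l ≤ m' l := fun l hl => by
    rcases Nat.eq_zero_or_pos l with rfl | hpos
    · exact h0.ge
    · exact hle l hpos hl
  exact ⟨pad m θ, hcrit.pad σ loss X Y h0 hw hLtop,
    fun x _ hi => (absorbs_pad σ θ).preact_eq σ hw x le_rfl hi⟩

/-- Embedding Principle of critical functions: every critical function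
of the narrower network is a critical function of any wider network. -/
theorem embedding_principle_critical_functions
    (K : ℕ) (hK : 1 ≤ K) (m m' : ℕ → ℕ)
    (h0 : m' 0 = m 0) (hLtop : m' (K + 1) = m (K + 1))
    (hle : ∀ l, 1 ≤ l → l ≤ K → m l ≤ m' l)
    (σ : ℝ → ℝ) (hσ : Differentiable ℝ σ)
    (loss : (ℕ → ℝ) → (ℕ → ℝ) → ℝ) (hloss : LossDiff loss)
    (n : ℕ) (X Y : Fin n → ℕ → ℝ)
    (θ : NNParams) (hcrit : IsCritical (risk σ m K loss X Y) m K θ) :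
    ∃ θ' : NNParams,
      IsCritical (risk σ m' K loss X Y) m' K θ' ∧
      ∀ (x : ℕ → ℝ) (i : ℕ), i < m (K + 1) →
        nnOut σ m' K θ' x i = nnOut σ m K θ x i :=
  embedding_principle_critical_functions_general K m m' h0 hLtop hle σ loss n X Y θ hcrit

end EmbeddingPrinciple
end

section
/- Let T be an affine injective map from the parameter space of NN({m_l}_{l=0}^L) to that of a wider NN({m'_l}_{l=0}^L) such that f_{T(θ)}(x) = f_θ(x) for every θ, every activation, and every input x. Suppose there exist a total index mapping I = {I_l}_{l=0}^L and reals β^[l]_j (l ∈ [L], j ∈ [m'_l] \ I_l^{-1}(0)) such that for every parameter θ, every sample (x, y), every layer l ∈ [L], and every index j ∈ [m'_l]: (i) if I_l(j) ≠ 0 then (f^[l]_{T(θ)})_j = (f^[l]_θ)_{I_l(j)} and (e^[l]_{T(θ)})_j = β^[l]_j (e^[l]_θ)_{I_l(j)}; (ii) if I_l(j) = 0 then (f^[l]_{T(θ)})_j is constant in x and (e^[l]_{T(θ)})_j = 0, where e^[l]_θ = z^[l]_θ ∘ g^[l]_θ. Then for any data S, loss ℓ and activation σ (each differentiable), T maps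 every critical point of the narrow network's empirical risk to a critical point of the wider network's empirical risk. -/
/-!
Backpropagation expresses the partial derivatives of the empirical risk through the error
vectors: `∂R/∂W^{[l]}_{ij} = avg_a e^{[l]}_i f^{[l-1]}_j` and `∂R/∂b^{[l]}_i = avg_a e^{[l]}_i`.
Under the index mapping, each error entry of the wide network at `T θ` is `β^{[l]}_i` times an
error entry of the narrow network at `θ` (or zero), and each feature entry is a feature entry of
the narrow network (or a constant). Hence every partial derivative of the wide risk at `T θ` is a
multiple of a weight or bias partial derivative of the narrow risk at `θ`, all of which vanish.
-/

namespace EmbeddingPrinciple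

lemma feat_congr (σ : ℝ → ℝ) (m : ℕ → ℕ) {θ₁ θ₂ : NNParams} (x : ℕ → ℝ) :
    ∀ l, (∀ u < l, θ₁ u = θ₂ u) → feat σ m θ₁ x l = feat σ m θ₂ x l
  | 0, _ => rfl
  | l + 1, h => by
    simp only [feat, feat_congr σ m x l fun u hu => h u (by omega), h l l.lt_succ_self]

lemma updW_of_ne (θ : NNParams) {l l' : ℕ} (i j : ℕ) (t : ℝ) (h : l' ≠ l) :
    updW θ l i j t l' = θ l' := if_neg h

lemma updB_of_ne (θ : NNParams) {l l' : ℕ} (i : ℕ) (t : ℝ) (h : l' ≠ l) :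
    updB θ l i t l' = θ l' := if_neg h

lemma updW_self (θ : NNParams) (l i j : ℕ) : updW θ l i j ((θ l).1 i j) = θ := by
  funext l'
  by_cases h : l' = l
  · subst h
    ext i' j' <;> simp only [updW, if_true]
    split_ifs with hc <;> simp_all
  · exact if_neg h

lemma updB_self (θ : NNParams) (l i : ℕ) : updB θ l i ((θ l).2 i) = θ := by
  funext l'
  by_cases h : l' = l
  · subst h
    ext i' <;> simp only [updB, if_true]
    split_ifs with hc <;> simp_all
  · exact if_neg h

noncomputable def preactTangent (σ : ℝ → ℝ) (m : ℕ → ℕ) (θ : NNParams) (x : ℕ → ℝ) (l : ℕ)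
    (P₀ : ℕ → ℝ) : ℕ → ℕ → ℝ
  | 0 => P₀
  | u + 1 => fun i =>
      ∑ k ∈ Finset.range (m (l + u + 1)),
        (θ (l + u + 1)).1 i k * (gFeat σ m θ x (l + u) k * preactTangent σ m θ x l P₀ u k)

section Backprop

variable (σ : ℝ → ℝ) (m : ℕ → ℕ) (K : ℕ) (θ : NNParams)
  (dloss : (ℕ → ℝ) → (ℕ → ℝ) → ℕ → ℝ) (x y : ℕ → ℝ)

lemma errE_eq_sum_mul_gFeat {l : ℕ} (hl : l + 1 ≤ K) (k : ℕ) :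
    errE σ m K θ dloss x y (l + 1) k =
      (∑ i ∈ Finset.range (m (l + 2)),
        (θ (l + 1)).1 i k * errE σ m K θ dloss x y (l + 2) i) * gFeat σ m θ x l k := by
  obtain ⟨t, rfl⟩ : ∃ t, K = l + 1 + t := ⟨K - (l + 1), by omega⟩
  have h1 : l + 1 + t + 1 - (l + 1) = t + 1 := by omega
  have h2 : l + 1 + t + 1 - t = l + 2 := by omega
  have h3 : l + 1 + t - t = l + 1 := by omega
  have h4 : l + 1 + t + 1 - (l + 2) = t := by omega
  simp only [errE, h1, h4, errRev, h2, h3, add_tsub_cancel_right,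
    if_neg (show l + 1 ≠ l + 1 + t + 1 by omega)]
  congr 1
  refine Finset.sum_congr rfl fun i _ => ?_
  by_cases ht : t = 0 <;> simp [ht]

-- Backpropagation as the adjoint of forward-mode differentiation.
lemma sum_errE_mul_preactTangent (l : ℕ) (P₀ : ℕ → ℝ) :
    ∀ u, l + u ≤ K →
      ∑ i ∈ Finset.range (m (l + u + 1)),
          errE σ m K θ dloss x y (l + u + 1) i * preactTangent σ m θ x l P₀ u i
        = ∑ i ∈ Finset.range (m (l + 1)), errE σ m K θ dloss x y (l + 1) i * P₀ i
  | 0, _ => rfl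
  | u + 1, h => by
    rw [← sum_errE_mul_preactTangent l P₀ u (by omega), show l + (u + 1) + 1 = l + u + 2 by omega]
    simp only [errE_eq_sum_mul_gFeat σ m K θ dloss x y (l := l + u) (by omega)]
    simp only [preactTangent, Finset.mul_sum, Finset.sum_mul]
    rw [Finset.sum_comm]
    exact Finset.sum_congr rfl fun k _ => Finset.sum_congr rfl fun i _ => by ring

end Backprop

section Tangent

variable (σ : ℝ → ℝ) (m : ℕ → ℕ)

lemma hasDerivAt_preact_preactTangent (hσ : Differentiable ℝ σ) {θ : NNParams} {x : ℕ → ℝ} {l : ℕ}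
    {η : ℝ → NNParams} {t₀ : ℝ} (hη : ∀ t l', l < l' → η t l' = θ l') (hη₀ : η t₀ = θ)
    {P₀ : ℕ → ℝ} (hP₀ : ∀ i, HasDerivAt (fun t => preact σ m (η t) x l i) (P₀ i) t₀) :
    ∀ u i, HasDerivAt (fun t => preact σ m (η t) x (l + u) i)
      (preactTangent σ m θ x l P₀ u i) t₀
  | 0, i => hP₀ i
  | u + 1, i => by
    have hfun : (fun t => preact σ m (η t) x (l + (u + 1)) i) = fun t =>
        (∑ k ∈ Finset.range (m (l + u + 1)),
          (θ (l + u + 1)).1 i k * σ (preact σ m (η t) x (l + u) k)) + (θ (l + u + 1)).2 i := by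
      funext t
      rw [preact, hη t _ (by omega)]
      rfl
    rw [hfun]
    refine HasDerivAt.add_const _ (HasDerivAt.fun_sum fun k _ => ?_)
    have hk := ((hσ _).hasDerivAt.comp t₀
      (hasDerivAt_preact_preactTangent hσ hη hη₀ hP₀ u k)).const_mul ((θ (l + u + 1)).1 i k)
    rwa [hη₀] at hk

lemma hasDerivAt_preact_updW (θ : NNParams) (x : ℕ → ℝ) {l j₀ : ℕ} (hj₀ : j₀ < m l)
    (i₀ i : ℕ) (t₀ : ℝ) :
    HasDerivAt (fun t => preact σ m (updW θ l i₀ j₀ t) x l i)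
      (if i = i₀ then feat σ m θ x l j₀ else 0) t₀ := by
  have hfeat (t : ℝ) : feat σ m (updW θ l i₀ j₀ t) x l = feat σ m θ x l :=
    feat_congr σ m x l fun u hu => updW_of_ne θ i₀ j₀ t (by omega)
  have hsum : (if i = i₀ then feat σ m θ x l j₀ else 0) = (∑ k ∈ Finset.range (m l),
      (if i = i₀ ∧ k = j₀ then 1 else 0) * feat σ m θ x l k) + 0 := by
    by_cases hi : i = i₀ <;> simp [hi, hj₀]
  simp only [preact, hfeat, hsum, updW, if_true]
  refine HasDerivAt.add (HasDerivAt.fun_sum fun k _ => ?_) (hasDerivAt_const _ _)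
  split_ifs
  · exact (hasDerivAt_id t₀).mul_const _
  · exact (hasDerivAt_const t₀ _).mul_const _

lemma hasDerivAt_preact_updB (θ : NNParams) (x : ℕ → ℝ) (l i₀ i : ℕ) (t₀ : ℝ) :
    HasDerivAt (fun t => preact σ m (updB θ l i₀ t) x l i) (if i = i₀ then 1 else 0) t₀ := by
  have hfeat (t : ℝ) : feat σ m (updB θ l i₀ t) x l = feat σ m θ x l :=
    feat_congr σ m x l fun u hu => updB_of_ne θ i₀ t (by omega)
  simp only [preact, hfeat, updB, if_true]
  split_ifs
  · exact (hasDerivAt_id t₀).const_add _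
  · exact (hasDerivAt_const t₀ _).const_add _

end Tangent

def HasPartialDerivs (loss : (ℕ → ℝ) → (ℕ → ℝ) → ℝ) (dloss : (ℕ → ℝ) → (ℕ → ℝ) → ℕ → ℝ) :
    Prop :=
  ∀ (u y : ℕ → ℝ) (i : ℕ),
    HasDerivAt (fun t => loss (Function.update u i t) y) (dloss u y i) (u i)

noncomputable def extendZero (d : ℕ) (u : Fin d → ℝ) : ℕ → ℝ :=
  fun i => if h : i < d then u ⟨i, h⟩ else 0

lemma extendZero_update {d : ℕ} (u : Fin d → ℝ) (i : Fin d) (s : ℝ) :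
    extendZero d (Function.update u i s) = Function.update (extendZero d u) i s := by
  funext j
  by_cases hj : j < d
  · simp [extendZero, hj, Function.update_apply, Fin.ext_iff]
  · have : j ≠ i := fun h => hj (h ▸ i.2)
    simp [extendZero, hj, this]

section Loss

variable {loss : (ℕ → ℝ) → (ℕ → ℝ) → ℝ} {dloss : (ℕ → ℝ) → (ℕ → ℝ) → ℕ → ℝ}

lemma fderiv_loss_extendZero_single (hloss : LossDiff loss) (hdl : HasPartialDerivs loss dloss)
    (y : ℕ → ℝ) {d : ℕ} (u : Fin d → ℝ) (i : Fin d) :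
    fderiv ℝ (fun v => loss (extendZero d v) y) u (Pi.single i 1) =
      dloss (extendZero d u) y i := by
  have hF := ((hloss y d (Function.update u i (u i))).hasFDerivAt).comp_hasDerivAt (u i)
    (hasDerivAt_update u i (u i))
  rw [Function.update_eq_self] at hF
  have hdl' := hdl (extendZero d u) y i
  simp only [← extendZero_update, extendZero, i.2, dif_pos] at hdl'
  exact hF.unique hdl'

lemma hasDerivAt_loss_comp (hloss : LossDiff loss) (hdl : HasPartialDerivs loss dloss)
    (y : ℕ → ℝ) {d : ℕ} {v : ℝ → ℕ → ℝ} {v' : ℕ → ℝ} {t₀ : ℝ}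
    (hv : ∀ i < d, HasDerivAt (fun t => v t i) (v' i) t₀) (hvd : ∀ t i, d ≤ i → v t i = 0) :
    HasDerivAt (fun t => loss (v t) y) (∑ i ∈ Finset.range d, dloss (v t₀) y i * v' i) t₀ := by
  set w : ℝ → Fin d → ℝ := fun t i => v t i
  have hvw (t : ℝ) : v t = extendZero d (w t) := by
    funext i
    by_cases hi : i < d
    · simp [extendZero, hi, w]
    · simp [extendZero, hi, hvd t i (not_lt.1 hi)]
  have hw : HasDerivAt w (fun i => v' i) t₀ := hasDerivAt_pi.2 fun i => hv i i.2
  have hcomp : HasDerivAt (fun t => loss (extendZero d (w t)) y)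
      (fderiv ℝ (fun u => loss (extendZero d u) y) (w t₀) fun i => v' i) t₀ :=
    (hloss y d (w t₀)).hasFDerivAt.comp_hasDerivAt t₀ hw
  have hsum : fderiv ℝ (fun u => loss (extendZero d u) y) (w t₀) (fun i => v' i) =
      ∑ i ∈ Finset.range d, dloss (v t₀) y i * v' i := by
    have hpi := (fderiv ℝ (fun u => loss (extendZero d u) y) (w t₀)).toLinearMap.pi_apply_eq_sum_univ
      (fun i => v' i)
    simp only [ContinuousLinearMap.coe_coe] at hpi
    rw [hpi, ← Fin.sum_univ_eq_sum_range]
    refine Finset.sum_congr rfl fun i _ => ?_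
    have hsingle : (fun j => if i = j then (1 : ℝ) else 0) = Pi.single i 1 := by
      funext j; simp [Pi.single_apply, eq_comm]
    rw [hsingle, fderiv_loss_extendZero_single hloss hdl y, ← hvw, smul_eq_mul, mul_comm]
  simpa only [← hvw, hsum] using hcomp

end Loss

section Gradient

variable {σ : ℝ → ℝ} {m : ℕ → ℕ} {K : ℕ} {loss : (ℕ → ℝ) → (ℕ → ℝ) → ℝ}
  {dloss : (ℕ → ℝ) → (ℕ → ℝ) → ℕ → ℝ}

lemma hasDerivAt_loss_truncOut (hσ : Differentiable ℝ σ) (hloss : LossDiff loss)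
    (hdl : HasPartialDerivs loss dloss) {θ : NNParams} (x y : ℕ → ℝ) {l : ℕ} (hl : l ≤ K)
    {η : ℝ → NNParams} {t₀ : ℝ} (hη : ∀ t l', l < l' → η t l' = θ l') (hη₀ : η t₀ = θ)
    {P₀ : ℕ → ℝ} (hP₀ : ∀ i, HasDerivAt (fun t => preact σ m (η t) x l i) (P₀ i) t₀) :
    HasDerivAt (fun t => loss (truncOut σ m K (η t) x) y)
      (∑ i ∈ Finset.range (m (l + 1)), errE σ m K θ dloss x y (l + 1) i * P₀ i) t₀ := by
  have hv : ∀ i < m (K + 1), HasDerivAt (fun t => truncOut σ m K (η t) x i)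
      (preactTangent σ m θ x l P₀ (K - l) i) t₀ := fun i hi => by
    simpa only [truncOut, nnOut, hi, if_true, Nat.add_sub_cancel' hl]
      using hasDerivAt_preact_preactTangent σ m hσ hη hη₀ hP₀ (K - l) i
  have h := hasDerivAt_loss_comp hloss hdl y hv fun t i hi => if_neg (not_lt.2 hi)
  rw [hη₀] at h
  convert h using 1
  have hKl : l + (K - l) + 1 = K + 1 := by omega
  rw [← sum_errE_mul_preactTangent σ m K θ dloss x y l P₀ (K - l) (by omega), hKl]
  simp [errE, errRev]

lemma hasDerivAt_loss_updW (hσ : Differentiable ℝ σ) (hloss : LossDiff loss)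
    (hdl : HasPartialDerivs loss dloss) (θ : NNParams) (x y : ℕ → ℝ) {l i₀ j₀ : ℕ}
    (hl : l ≤ K) (hi₀ : i₀ < m (l + 1)) (hj₀ : j₀ < m l) :
    HasDerivAt (fun t => loss (truncOut σ m K (updW θ l i₀ j₀ t) x) y)
      (errE σ m K θ dloss x y (l + 1) i₀ * feat σ m θ x l j₀) ((θ l).1 i₀ j₀) := by
  have h := hasDerivAt_loss_truncOut hσ hloss hdl x y hl (η := updW θ l i₀ j₀)
    (fun t l' hl' => updW_of_ne θ i₀ j₀ t hl'.ne') (updW_self θ l i₀ j₀)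
    (hasDerivAt_preact_updW σ m θ x hj₀ i₀ · _)
  simpa [mul_ite, hi₀] using h

lemma hasDerivAt_loss_updB (hσ : Differentiable ℝ σ) (hloss : LossDiff loss)
    (hdl : HasPartialDerivs loss dloss) (θ : NNParams) (x y : ℕ → ℝ) {l i₀ : ℕ}
    (hl : l ≤ K) (hi₀ : i₀ < m (l + 1)) :
    HasDerivAt (fun t => loss (truncOut σ m K (updB θ l i₀ t) x) y)
      (errE σ m K θ dloss x y (l + 1) i₀) ((θ l).2 i₀) := by
  have h := hasDerivAt_loss_truncOut hσ hloss hdl x y hl (η := updB θ l i₀)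
    (fun t l' hl' => updB_of_ne θ i₀ t hl'.ne') (updB_self θ l i₀)
    (hasDerivAt_preact_updB σ m θ x l i₀ · _)
  simpa [mul_ite, hi₀] using h

lemma deriv_risk_updW (hσ : Differentiable ℝ σ) (hloss : LossDiff loss)
    (hdl : HasPartialDerivs loss dloss) {n : ℕ} (X Y : Fin n → ℕ → ℝ) (θ : NNParams)
    {l i j : ℕ} (hl : l ≤ K) (hi : i < m (l + 1)) (hj : j < m l) :
    deriv (fun t => risk σ m K loss X Y (updW θ l i j t)) ((θ l).1 i j) =
      (n : ℝ)⁻¹ * ∑ a, errE σ m K θ dloss (X a) (Y a) (l + 1) i * feat σ m θ (X a) l j :=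
  ((HasDerivAt.fun_sum fun a _ =>
    hasDerivAt_loss_updW hσ hloss hdl θ (X a) (Y a) hl hi hj).const_mul _).deriv

lemma deriv_risk_updB (hσ : Differentiable ℝ σ) (hloss : LossDiff loss)
    (hdl : HasPartialDerivs loss dloss) {n : ℕ} (X Y : Fin n → ℕ → ℝ) (θ : NNParams)
    {l i : ℕ} (hl : l ≤ K) (hi : i < m (l + 1)) :
    deriv (fun t => risk σ m K loss X Y (updB θ l i t)) ((θ l).2 i) =
      (n : ℝ)⁻¹ * ∑ a, errE σ m K θ dloss (X a) (Y a) (l + 1) i :=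
  ((HasDerivAt.fun_sum fun a _ =>
    hasDerivAt_loss_updB hσ hloss hdl θ (X a) (Y a) hl hi).const_mul _).deriv

end Gradient

lemma inv_mul_sum_eq_zero_of_eq_const_mul {n : ℕ} {f g : Fin n → ℝ} (c : ℝ)
    (hfg : ∀ a, f a = c * g a) (hg : (n : ℝ)⁻¹ * ∑ a, g a = 0) :
    (n : ℝ)⁻¹ * ∑ a, f a = 0 := by
  simp only [hfg, ← Finset.mul_sum, mul_left_comm _ c, hg, mul_zero]

theorem criticality_preserving_from_total_index_mapping_general
    (K : ℕ) (m m' : ℕ → ℕ)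
    (h0 : m' 0 = m 0)
    (T : NNParams → NNParams)
    -- total index mapping (`none` plays the role of the paper's index `0`)
    (I : ℕ → ℕ → Option ℕ)
    (hIval : ∀ l, l ≤ K + 1 → ∀ j, j < m' l → ∀ s, I l j = some s → s < m l)
    -- auxiliary variables β and conditions (i), (ii), for every parameter,
    -- activation, loss gradient and sample
    (β : ℕ → ℕ → ℝ)
    (hcond : ∀ (σ : ℝ → ℝ) (dloss : (ℕ → ℝ) → (ℕ → ℝ) → ℕ → ℝ) (θ : NNParams)
        (x y : ℕ → ℝ) (l : ℕ), 1 ≤ l → l ≤ K + 1 → ∀ j, j < m' l →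
        ((∀ s, I l j = some s →
            (l ≤ K → feat σ m' (T θ) x l j = feat σ m θ x l s) ∧
            errE σ m' K (T θ) dloss x y l j = β l j * errE σ m K θ dloss x y l s) ∧
         (I l j = none →
            (l ≤ K → ∀ x₁ x₂ : ℕ → ℝ, feat σ m' (T θ) x₁ l j = feat σ m' (T θ) x₂ l j) ∧
            errE σ m' K (T θ) dloss x y l j = 0)))
    -- then `T` preserves criticality for every data, loss and activation
    (σ : ℝ → ℝ) (hσ : Differentiable ℝ σ)
    (loss : (ℕ → ℝ) → (ℕ → ℝ) → ℝ) (hloss : LossDiff loss)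
    (dloss : (ℕ → ℝ) → (ℕ → ℝ) → ℕ → ℝ)
    (hdl : ∀ (u y : ℕ → ℝ) (i : ℕ),
        HasDerivAt (fun t => loss (Function.update u i t) y) (dloss u y i) (u i))
    (n : ℕ) (X Y : Fin n → ℕ → ℝ) (θ : NNParams)
    (hcrit : IsCritical (risk σ m K loss X Y) m K θ) :
    IsCritical (risk σ m' K loss X Y) m' K (T θ) := by
  have hW {l i j} (hl : l ≤ K) (hi : i < m (l + 1)) (hj : j < m l) :=
    (deriv_risk_updW hσ hloss hdl X Y θ hl hi hj).symm.trans (hcrit.1 l hl i hi j hj)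
  have hB {l i} (hl : l ≤ K) (hi : i < m (l + 1)) :=
    (deriv_risk_updB hσ hloss hdl X Y θ hl hi).symm.trans (hcrit.2 l hl i hi)
  have hfeat : ∀ l ≤ K, ∀ j < m' l,
      (∃ s < m l, ∀ x, feat σ m' (T θ) x l j = feat σ m θ x l s) ∨
        ∃ c, ∀ x, feat σ m' (T θ) x l j = c := by
    rintro (_ | l) hl j hj
    · exact .inl ⟨j, h0 ▸ hj, fun x => rfl⟩
    have hc x := hcond σ dloss θ x x (l + 1) (by omega) (by omega) j hj
    rcases hI : I (l + 1) j with _ | s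
    · exact .inr ⟨_, fun x => ((hc x).2 hI).1 hl x 0⟩
    · exact .inl ⟨s, hIval _ (by omega) j hj s hI, fun x => ((hc x).1 s hI).1 hl⟩
  have herr : ∀ l ≤ K, ∀ i < m' (l + 1),
      (∀ x y, errE σ m' K (T θ) dloss x y (l + 1) i = 0) ∨
        ∃ s < m (l + 1), ∀ x y, errE σ m' K (T θ) dloss x y (l + 1) i =
          β (l + 1) i * errE σ m K θ dloss x y (l + 1) s := by
    intro l hl i hi
    have hc x y := hcond σ dloss θ x y (l + 1) (by omega) (by omega) i hi
    rcases hI : I (l + 1) i with _ | s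
    · exact .inl fun x y => ((hc x y).2 hI).2
    · exact .inr ⟨s, hIval _ (by omega) i hi s hI, fun x y => ((hc x y).1 s hI).2⟩
  refine ⟨fun l hl i hi j hj => ?_, fun l hl i hi => ?_⟩
  · rw [deriv_risk_updW hσ hloss hdl X Y (T θ) hl hi hj]
    rcases herr l hl i hi with he | ⟨s, hs, he⟩
    · simp [he]
    rcases hfeat l hl j hj with ⟨s', hs', hf⟩ | ⟨c, hf⟩
    · exact inv_mul_sum_eq_zero_of_eq_const_mul (β (l + 1) i)
        (fun a => by rw [he, hf, mul_assoc]) (hW hl hs hs')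
    · exact inv_mul_sum_eq_zero_of_eq_const_mul (β (l + 1) i * c)
        (fun a => by rw [he, hf, mul_right_comm]) (hB hl hs)
  · rw [deriv_risk_updB hσ hloss hdl X Y (T θ) hl hi]
    rcases herr l hl i hi with he | ⟨s, hs, he⟩
    · simp [he]
    · exact inv_mul_sum_eq_zero_of_eq_const_mul (β (l + 1) i) (fun a => he _ _) (hB hl hs)

/-- an affine injective output-preserving map admitting a total index
mapping with the stated feature/error-vector conditions is criticality preserving
(Lemma 8 in the paper). `errE` is the paper's `e^{[l]} = z^{[l]} ∘ g^{[l]}`. -/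
theorem criticality_preserving_from_total_index_mapping
    (K : ℕ) (hK : 1 ≤ K) (m m' : ℕ → ℕ)
    (h0 : m' 0 = m 0) (hLtop : m' (K + 1) = m (K + 1)) (hge : ∀ l, m l ≤ m' l)
    (T : NNParams → NNParams)
    -- affine and injective
    (hinj : Function.Injective T)
    (haff : IsLinearMap ℝ (fun θ : NNParams => T θ - T 0))
    -- output preserving, for every parameter, activation and input
    (hout : ∀ (σ : ℝ → ℝ) (θ : NNParams) (x : ℕ → ℝ) (i : ℕ), i < m (K + 1) →
        nnOut σ m' K (T θ) x i = nnOut σ m K θ x i)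
    -- total index mapping (`none` plays the role of the paper's index `0`)
    (I : ℕ → ℕ → Option ℕ)
    (hI0 : ∀ j, j < m' 0 → I 0 j = some j)
    (hIL : ∀ j, j < m' (K + 1) → I (K + 1) j = some j)
    (hIval : ∀ l, l ≤ K + 1 → ∀ j, j < m' l → ∀ s, I l j = some s → s < m l)
    (hItot : ∀ l, l ≤ K + 1 → ∀ s, s < m l → ∃ j, j < m' l ∧ I l j = some s)
    -- auxiliary variables β and conditions (i), (ii), for every parameter,
    -- activation, loss gradient and sample
    (β : ℕ → ℕ → ℝ)
    (hcond : ∀ (σ : ℝ → ℝ) (dloss : (ℕ → ℝ) → (ℕ → ℝ) → ℕ → ℝ) (θ : NNParams)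
        (x y : ℕ → ℝ) (l : ℕ), 1 ≤ l → l ≤ K + 1 → ∀ j, j < m' l →
        ((∀ s, I l j = some s →
            (l ≤ K → feat σ m' (T θ) x l j = feat σ m θ x l s) ∧
            errE σ m' K (T θ) dloss x y l j = β l j * errE σ m K θ dloss x y l s) ∧
         (I l j = none →
            (l ≤ K → ∀ x₁ x₂ : ℕ → ℝ, feat σ m' (T θ) x₁ l j = feat σ m' (T θ) x₂ l j) ∧
            errE σ m' K (T θ) dloss x y l j = 0)))
    -- then `T` preserves criticality for every data, loss and activation
    (σ : ℝ → ℝ) (hσ : Differentiable ℝ σ)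
    (loss : (ℕ → ℝ) → (ℕ → ℝ) → ℝ) (hloss : LossDiff loss)
    (dloss : (ℕ → ℝ) → (ℕ → ℝ) → ℕ → ℝ)
    (hdl : ∀ (u y : ℕ → ℝ) (i : ℕ),
        HasDerivAt (fun t => loss (Function.update u i t) y) (dloss u y i) (u i))
    (n : ℕ) (X Y : Fin n → ℕ → ℝ) (θ : NNParams)
    (hcrit : IsCritical (risk σ m K loss X Y) m K θ) :
    IsCritical (risk σ m' K loss X Y) m' K (T θ) :=
  criticality_preserving_from_total_index_mapping_general K m m' h0 T I hIval β hcond σ hσ loss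
    hloss dloss hdl n X Y θ hcrit

end EmbeddingPrinciple
end
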